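/- Let Q be a 2×2 rational matrix, and write Q = (p/q)·Q̃ with gcd(p,q) = 1, q > 0, Q̃ integral with coprime entries (if Q = 0, set q = 1, Q̃ = 0). Then the denominator of Q, namely q, divides q² / gcd(q, |det Q̃|), and consequently any integer matrix T with T·ℤ² = { v ∈ ℤ² : Q·v ∈ ℤ² } satisfies q ∣ |det T|. -/
import Mathlib


open Matrix

/-- The subgroup of integer vectors `v` with `Q·v` integral. -/
def intLattice (Q : Matrix (Fin 2) (Fin 2) ℚ) : AddSubgroup (Fin 2 → ℤ) where
  carrier := {v | ∀ i, ∃ n : ℤ, Q.mulVec (fun j => (v j : ℚ)) i = n}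
  zero_mem' := by
    intro i
    exact ⟨0, by simp [Matrix.mulVec]⟩
  add_mem' := by
    intro u v hu hv i
    obtain ⟨m, hm⟩ := hu i
    obtain ⟨n, hn⟩ := hv i
    refine ⟨m + n, ?_⟩
    have h : (fun j => (((u + v) j : ℤ) : ℚ)) = (fun j => ((u j : ℤ) : ℚ)) + fun j => ((v j : ℤ) : ℚ) := by
      funext j; simp
    rw [h, Matrix.mulVec_add, Pi.add_apply, hm, hn]
    push_cast; ring
  neg_mem' := by
    intro v hv i
    obtain ⟨n, hn⟩ := hv i
    refine ⟨-n, ?_⟩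
    have h : (fun j => (((-v) j : ℤ) : ℚ)) = -fun j => ((v j : ℤ) : ℚ) := by
      funext j; simp
    rw [h, Matrix.mulVec_neg, Pi.neg_apply, hn]
    push_cast; ring

/-- Gcd of the entries of a 2×2 integer matrix. -/
def entriesGcd (M : Matrix (Fin 2) (Fin 2) ℤ) : ℕ :=
  Nat.gcd (Nat.gcd (M 0 0).natAbs (M 0 1).natAbs) (Nat.gcd (M 1 0).natAbs (M 1 1).natAbs)

theorem den_dvd_index (Q : Matrix (Fin 2) (Fin 2) ℚ)
    (p : ℤ) (q : ℕ) (hq : 0 < q) (hpq : Nat.gcd p.natAbs q = 1)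
    (Qt : Matrix (Fin 2) (Fin 2) ℤ)
    (hfac : Q = ((p : ℚ) / (q : ℚ)) • Qt.map (Int.cast : ℤ → ℚ))
    (hprim : Q ≠ 0 → entriesGcd Qt = 1)
    (hzero : Q = 0 → q = 1 ∧ Qt = 0) :
    q ∣ q ^ 2 / Nat.gcd q Qt.det.natAbs ∧
    ∀ T : Matrix (Fin 2) (Fin 2) ℤ,
      Set.range T.mulVec = (intLattice Q : Set (Fin 2 → ℤ)) →
      q ∣ T.det.natAbs := by
  constructor
  · exact ⟨q / Nat.gcd q Qt.det.natAbs, by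
      rw [pow_two, Nat.mul_div_assoc q (Nat.gcd_dvd_left q Qt.det.natAbs)]⟩
  intro T hT
  by_cases hQ : Q = 0
  · obtain ⟨hq1, _⟩ := hzero hQ
    simp [hq1]
  have hg : entriesGcd Qt = 1 := hprim hQ
  have hq0 : (q : ℚ) ≠ 0 := Nat.cast_ne_zero.mpr hq.ne'
  -- columns of T lie in the lattice
  have hmem : ∀ k, (fun j => T j k) ∈ (intLattice Q : Set (Fin 2 → ℤ)) := by
    intro k
    rw [← hT]
    refine ⟨fun j => if j = k then 1 else 0, ?_⟩
    funext i
    fin_cases k <;> simp [Matrix.mulVec, dotProduct, Fin.sum_univ_two]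
  -- q divides each entry of Qt * T
  have hdvd : ∀ i k : Fin 2, (q : ℤ) ∣ (Qt i 0 * T 0 k + Qt i 1 * T 1 k) := by
    intro i k
    obtain ⟨n, hn⟩ := hmem k i
    rw [hfac] at hn
    have hn' : (p : ℚ) * (Qt i 0 * T 0 k + Qt i 1 * T 1 k) = n * q := by
      simp [Matrix.mulVec, dotProduct, Fin.sum_univ_two, Matrix.map_apply] at hn
      field_simp at hn
      linarith
    have hz : p * (Qt i 0 * T 0 k + Qt i 1 * T 1 k) = n * q := by
      exact_mod_cast hn'
    have hco : IsCoprime (q : ℤ) p := by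
      rw [Int.isCoprime_iff_gcd_eq_one, Int.gcd, Int.natAbs_natCast, Nat.gcd_comm]
      exact hpq
    exact hco.dvd_of_dvd_mul_left ⟨n, by linarith⟩
  -- hence q ∣ Qt i j * det T for all entries
  have hkey : ∀ i j : Fin 2, (q : ℤ) ∣ Qt i j * T.det := by
    intro i j
    obtain ⟨a, ha⟩ := hdvd i 0
    obtain ⟨b, hb⟩ := hdvd i 1
    have c0 : (q : ℤ) ∣ Qt i 0 * T.det := by
      rw [Matrix.det_fin_two]
      exact ⟨a * T 1 1 - b * T 1 0, by linear_combination T 1 1 * ha - T 1 0 * hb⟩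
    have c1 : (q : ℤ) ∣ Qt i 1 * T.det := by
      rw [Matrix.det_fin_two]
      exact ⟨b * T 0 0 - a * T 0 1, by linear_combination T 0 0 * hb - T 0 1 * ha⟩
    fin_cases j
    · exact c0
    · exact c1
  -- Bezout via nat gcds
  have hnat : ∀ i j : Fin 2, q ∣ (Qt i j).natAbs * T.det.natAbs := by
    intro i j
    have := Int.natAbs_dvd_natAbs.mpr (hkey i j)
    rwa [Int.natAbs_natCast, Int.natAbs_mul] at this
  have h1 : q ∣ Nat.gcd (Qt 0 0).natAbs (Qt 0 1).natAbs * T.det.natAbs := by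
    rw [← Nat.gcd_mul_right]
    exact Nat.dvd_gcd (hnat 0 0) (hnat 0 1)
  have h2 : q ∣ Nat.gcd (Qt 1 0).natAbs (Qt 1 1).natAbs * T.det.natAbs := by
    rw [← Nat.gcd_mul_right]
    exact Nat.dvd_gcd (hnat 1 0) (hnat 1 1)
  have h3 : q ∣ entriesGcd Qt * T.det.natAbs := by
    rw [entriesGcd, ← Nat.gcd_mul_right]
    exact Nat.dvd_gcd h1 h2
  rwa [hg, one_mul] at h3
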